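/- Let N ≥ 1, let A be an N×N real symmetric matrix with nonnegative entries and largest eigenvalue μ_max(A), let λ > 0 with λ·μ_max(A) ≤ 1, and let φ_i : ℝ → ℝ (i = 1,…,N) be functions with 0 < φ_i(t) ≤ 1 for all t. Suppose ρ : ℝ → ℝ^N is differentiable, satisfies 0 ≤ ρ_i(t) ≤ 1 for all i and all t ≥ 0, and solves ρ̇_i(t) = −ρ_i(t) + λφ_i(t)(1−ρ_i(t))·Σ_j a_ij ρ_j(t) for all i and t ≥ 0. Then the Lyapunov function V(t) = (1/2)·Σ_{i=1}^N ρ_i(t)² is nonincreasing on [0,∞). -/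

import Mathlib

/-!
Along a solution, `V' = ρ ⬝ᵥ ρ'`. Since `0 ≤ φ_i (1 - ρ_i) ≤ 1` and `Aρ ≥ 0` entrywise, this is at
most `λ ρᵀAρ - ρᵀρ`, and the Rayleigh bound `ρᵀAρ ≤ μ_max ρᵀρ` (the Loewner inequality
`A ≤ μ_max • 1`) makes it at most `(λ μ_max - 1) ρᵀρ ≤ 0`.
-/

open Matrix Finset
open scoped MatrixOrder ComplexOrder

theorem Matrix.IsHermitian.dotProduct_mulVec_le {n 𝕜 : Type*} [Fintype n] [DecidableEq n]
    [RCLike 𝕜] {A : Matrix n n 𝕜} (hA : A.IsHermitian) {r : ℝ} (hr : ∀ i, hA.eigenvalues i ≤ r)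
    (x : n → 𝕜) : star x ⬝ᵥ A *ᵥ x ≤ r * (star x ⬝ᵥ x) := by
  have hle : A ≤ algebraMap ℝ (Matrix n n 𝕜) r := by
    refine le_algebraMap_of_spectrum_le (fun μ hμ => ?_) hA
    rw [hA.spectrum_real_eq_range_eigenvalues] at hμ
    obtain ⟨i, rfl⟩ := hμ
    exact hr i
  have := (Matrix.le_iff.mp hle).dotProduct_mulVec_nonneg x
  rw [sub_mulVec, dotProduct_sub, sub_nonneg, Algebra.algebraMap_eq_smul_one, smul_mulVec,
    one_mulVec, dotProduct_smul] at this
  simpa [RCLike.real_smul_eq_coe_mul] using this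

theorem hasDerivAt_half_sum_sq {ι : Type*} [Fintype ι] {f : ℝ → ι → ℝ} {f' : ι → ℝ} {t : ℝ}
    (hf : ∀ i, HasDerivAt (fun s => f s i) (f' i) t) :
    HasDerivAt (fun s => (1 / 2 : ℝ) * ∑ i, f s i ^ 2) (∑ i, f t i * f' i) t := by
  refine ((HasDerivAt.fun_sum (u := univ) fun i _ => (hf i).fun_pow 2).const_mul
    (1 / 2 : ℝ)).congr_deriv ?_
  rw [mul_sum]
  refine sum_congr rfl fun i _ => ?_
  push_cast
  ring

/-- The right-hand side of the SIS system with awareness factors `φ`. -/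
def sisField {ι : Type*} [Fintype ι] (A : Matrix ι ι ℝ) (lam : ℝ) (φ x : ι → ℝ) : ι → ℝ :=
  fun i => -x i + lam * φ i * (1 - x i) * (A *ᵥ x) i

theorem dotProduct_sisField_nonpos {ι : Type*} [Fintype ι] [DecidableEq ι]
    {A : Matrix ι ι ℝ} (hA : A.IsHermitian) (hA₀ : ∀ i j, 0 ≤ A i j) {r lam : ℝ}
    (hr : ∀ i, hA.eigenvalues i ≤ r) (hlam : 0 ≤ lam) (hthr : lam * r ≤ 1) {φ x : ι → ℝ}
    (hφ : ∀ i, φ i ≤ 1) (hx : ∀ i, 0 ≤ x i ∧ x i ≤ 1) :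
    x ⬝ᵥ sisField A lam φ x ≤ 0 := by
  have hterm i : x i * sisField A lam φ x i ≤ -x i ^ 2 + lam * (x i * (A *ᵥ x) i) := by
    obtain ⟨hx₀, hx₁⟩ := hx i
    have hAx : 0 ≤ (A *ᵥ x) i := sum_nonneg fun j _ => mul_nonneg (hA₀ i j) (hx j).1
    have hφx : φ i * (1 - x i) ≤ 1 := by nlinarith [hφ i]
    simp only [sisField]
    nlinarith [mul_nonneg (mul_nonneg hx₀ hlam) hAx]
  calc x ⬝ᵥ sisField A lam φ x
      ≤ ∑ i, (-x i ^ 2 + lam * (x i * (A *ᵥ x) i)) := sum_le_sum fun i _ => hterm i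
    _ = lam * (x ⬝ᵥ A *ᵥ x) - x ⬝ᵥ x := by
        simp only [sum_add_distrib, sum_neg_distrib, ← mul_sum, dotProduct, sq]
        ring
    _ ≤ lam * (r * (x ⬝ᵥ x)) - x ⬝ᵥ x := by
        gcongr
        simpa using hA.dotProduct_mulVec_le hr x
    _ = (lam * r - 1) * (x ⬝ᵥ x) := by ring
    _ ≤ 0 := mul_nonpos_of_nonpos_of_nonneg (by linarith) (dotProduct_self_star_nonneg x)

/-- Theorem 2 (Lyapunov monotonicity): along any solution of the SIS system with awareness
factors in `(0,1]`, if `λ μ_max(A) ≤ 1` then `V(t) = (1/2) Σ_i ρ_i(t)²` is nonincreasing on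
`[0,∞)`. -/
theorem lyapunov_nonincreasing
    (N : ℕ) (hN : 1 ≤ N) (A : Matrix (Fin N) (Fin N) ℝ)
    (hA : A.IsHermitian) (hApos : ∀ i j, 0 ≤ A i j)
    (lam : ℝ) (hlam : 0 < lam)
    (hthr : lam * Finset.univ.sup' (Finset.univ_nonempty_iff.mpr ⟨⟨0, hN⟩⟩) hA.eigenvalues ≤ 1)
    (φ : Fin N → ℝ → ℝ) (hφ : ∀ i t, 0 < φ i t ∧ φ i t ≤ 1)
    (ρ : ℝ → Fin N → ℝ) (hdiff : ∀ i, Differentiable ℝ (fun t => ρ t i))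
    (hrange : ∀ i t, 0 ≤ t → 0 ≤ ρ t i ∧ ρ t i ≤ 1)
    (hode : ∀ i t, 0 ≤ t →
      deriv (fun s => ρ s i) t =
        -ρ t i + lam * φ i t * (1 - ρ t i) * ∑ j, A i j * ρ t j) :
    AntitoneOn (fun t => (1 / 2 : ℝ) * ∑ i, ρ t i ^ 2) (Set.Ici 0) := by
  have hV t := hasDerivAt_half_sum_sq fun i => (hdiff i t).hasDerivAt
  refine antitoneOn_of_hasDerivWithinAt_nonpos (convex_Ici 0)
    (fun t _ => (hV t).continuousAt.continuousWithinAt) (fun t _ => (hV t).hasDerivWithinAt)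
    fun t ht => ?_
  have ht₀ : 0 ≤ t := (interior_subset ht : t ∈ Set.Ici 0)
  rw [sum_congr rfl fun i _ => by rw [hode i t ht₀]]
  exact dotProduct_sisField_nonpos hA hApos (fun i => le_sup' hA.eigenvalues (mem_univ i)) hlam.le
    hthr (fun i => (hφ i t).2) fun i => hrange i t ht₀
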